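/- Let ε ≥ 0 and let 0 = b_1 < … < b_k = n−1 be an ε-feasible sequence. Then every point of the cloud lies in the ε-offset of the polygonal path with vertices p b_1, …, p b_k: for every s ∈ {0,…,n−1}, Metric.infDist (p s) (⋃_{i=2}^{k} segment ℝ (p b_{i−1}) (p b_i)) ≤ ε. (Geometric claim used in the proof of Corollary 2: orthogonal ε-approximation of each monotone subcloud implies the cloud is contained in the Euclidean ε-offset of the reconstructed polygonal path, in the sense of Definition 1.) -/

import Mathlib

/-- The projection value `t s = ⟪p s, u⟫` of the cloud point `p s` onto the direction `u`. -/
noncomputable def projVal {d n : ℕ} (p : Fin n → EuclideanSpace ℝ (Fin d))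
    (u : EuclideanSpace ℝ (Fin d)) (s : Fin n) : ℝ :=
  inner ℝ (p s) u

/-- The point `q(s,i,j)` of the straight segment `[p i, p j]` whose projection
onto `u` equals `t s`. -/
noncomputable def segPoint {d n : ℕ} (p : Fin n → EuclideanSpace ℝ (Fin d))
    (u : EuclideanSpace ℝ (Fin d)) (s i j : Fin n) : EuclideanSpace ℝ (Fin d) :=
  p i + ((projVal p u s - projVal p u i) / (projVal p u j - projVal p u i)) • (p j - p i)

/-- The orthogonal distance `dOrth(s,i,j)` from `p s` to the segment `[p i, p j]`,
measured orthogonally to `u`. -/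
noncomputable def dOrth {d n : ℕ} (p : Fin n → EuclideanSpace ℝ (Fin d))
    (u : EuclideanSpace ℝ (Fin d)) (s i j : Fin n) : ℝ :=
  dist (p s) (segPoint p u s i j)

/-- The orthogonal distance `D(i,j)` from the segment `[p i, p j]` to the cloud:
the maximum of `dOrth(s,i,j)` over `i ≤ s ≤ j` (endpoints contribute `0`). -/
noncomputable def segCloudDist {d n : ℕ} (p : Fin n → EuclideanSpace ℝ (Fin d))
    (u : EuclideanSpace ℝ (Fin d)) (i j : Fin n) : ℝ :=
  (insert (0 : ℝ) ((Finset.Icc i j).image fun s => dOrth p u s i j)).max'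
    (Finset.insert_nonempty _ _)

/-- An `ε`-greedy sequence `0 = a_1 < … < a_m = n-1` (here with `m + 1` vertices
`a 0, …, a (Fin.last m)`): (a) for every step and every `k` with `a_{i-1} < k ≤ a_i`,
`D(a_{i-1}, k) ≤ ε`; (b) for every step with `a_i < n - 1`, `D(a_{i-1}, a_i + 1) > ε`. -/
def IsGreedySeq {d n : ℕ} (p : Fin n → EuclideanSpace ℝ (Fin d))
    (u : EuclideanSpace ℝ (Fin d)) (ε : ℝ) {m : ℕ} (a : Fin (m + 1) → Fin n) : Prop :=
  StrictMono a ∧ (a 0 : ℕ) = 0 ∧ (a (Fin.last m) : ℕ) = n - 1 ∧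
  (∀ i : Fin m, ∀ k : Fin n, a i.castSucc < k → k ≤ a i.succ →
    segCloudDist p u (a i.castSucc) k ≤ ε) ∧
  (∀ i : Fin m, ∀ h : (a i.succ : ℕ) + 1 < n,
    ε < segCloudDist p u (a i.castSucc) ⟨(a i.succ : ℕ) + 1, h⟩)

/-- An `ε`-feasible sequence `0 = b_1 < … < b_k = n-1` (here with `k + 1` vertices):
`D(b_{i-1}, b_i) ≤ ε` for every step. -/
def IsFeasibleSeq {d n : ℕ} (p : Fin n → EuclideanSpace ℝ (Fin d))
    (u : EuclideanSpace ℝ (Fin d)) (ε : ℝ) {k : ℕ} (b : Fin (k + 1) → Fin n) : Prop :=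
  StrictMono b ∧ (b 0 : ℕ) = 0 ∧ (b (Fin.last k) : ℕ) = n - 1 ∧
  ∀ i : Fin k, segCloudDist p u (b i.castSucc) (b i.succ) ≤ ε

/-!
Every cloud index `s` lies between two consecutive vertices `b_{i-1} ≤ s ≤ b_i` of the sequence.
Since the projections are monotone, `t s` lies between `t b_{i-1}` and `t b_i`, so the point
`q(s, b_{i-1}, b_i)` lies on the segment `[p b_{i-1}, p b_i]`, and its distance to `p s` is
`dOrth(s, b_{i-1}, b_i) ≤ D(b_{i-1}, b_i) ≤ ε`.
-/

open Metric

theorem Fin.exists_castSucc_le_and_le_succ {α : Type*} [LinearOrder α] {k : ℕ} (hk : 0 < k)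
    (b : Fin (k + 1) → α) {x : α} (h0 : b 0 ≤ x) (hlast : x ≤ b (Fin.last k)) :
    ∃ i : Fin k, b i.castSucc ≤ x ∧ x ≤ b i.succ := by
  by_contra! hstep
  have hle : ∀ j : Fin (k + 1), b j ≤ x :=
    Fin.induction h0 fun i hi => (hstep i hi).le
  obtain ⟨m, rfl⟩ := Nat.exists_eq_succ_of_ne_zero hk.ne'
  exact (hstep (Fin.last m) (hle _)).not_ge hlast

section Cloud

variable {d n : ℕ} (p : Fin n → EuclideanSpace ℝ (Fin d)) (u : EuclideanSpace ℝ (Fin d))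

theorem dOrth_le_segCloudDist {s i j : Fin n} (hs : s ∈ Finset.Icc i j) :
    dOrth p u s i j ≤ segCloudDist p u i j :=
  Finset.le_max' (insert 0 ((Finset.Icc i j).image fun s => dOrth p u s i j)) _
    (Finset.mem_insert_of_mem (Finset.mem_image_of_mem _ hs))

theorem segPoint_mem_segment {s i j : Fin n} (hi : projVal p u i ≤ projVal p u s)
    (hj : projVal p u s ≤ projVal p u j) :
    segPoint p u s i j ∈ segment ℝ (p i) (p j) := by
  have hij : 0 ≤ projVal p u j - projVal p u i := sub_nonneg.2 (hi.trans hj)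
  rw [segment_eq_image']
  exact ⟨_, ⟨div_nonneg (sub_nonneg.2 hi) hij, div_le_one_of_le₀ (by linarith) hij⟩, rfl⟩

theorem infDist_le_segCloudDist (hmono : Monotone (projVal p u)) {s i j : Fin n}
    {t : Set (EuclideanSpace ℝ (Fin d))} (hsub : segment ℝ (p i) (p j) ⊆ t)
    (hs : s ∈ Finset.Icc i j) :
    infDist (p s) t ≤ segCloudDist p u i j := by
  obtain ⟨hi, hj⟩ := Finset.mem_Icc.1 hs
  calc infDist (p s) t ≤ dOrth p u s i j :=
        infDist_le_dist_of_mem (hsub (segPoint_mem_segment p u (hmono hi) (hmono hj)))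
    _ ≤ segCloudDist p u i j := dOrth_le_segCloudDist p u hs

end Cloud

theorem feasible_path_offset_general {d n : ℕ} (hn : 2 ≤ n)
    (p : Fin n → EuclideanSpace ℝ (Fin d)) (u : EuclideanSpace ℝ (Fin d))
    (hmono : StrictMono (projVal p u))
    (ε : ℝ) {k : ℕ} (b : Fin (k + 1) → Fin n)
    (hb : IsFeasibleSeq p u ε b) (s : Fin n) :
    Metric.infDist (p s)
      (⋃ i : Fin k, segment ℝ (p (b i.castSucc)) (p (b i.succ))) ≤ ε := by
  obtain ⟨-, hb0, hblast, hbD⟩ := hb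
  have hk : 0 < k := by
    rcases k with _ | k
    · exact absurd (hb0.symm.trans hblast) (by omega)
    · exact k.succ_pos
  obtain ⟨i, hi, hsi⟩ := Fin.exists_castSucc_le_and_le_succ hk b (x := s)
    (by simp [Fin.le_def, hb0]) (by rw [Fin.le_def, hblast]; omega)
  exact (infDist_le_segCloudDist p u hmono.monotone (Set.subset_iUnion_of_subset i subset_rfl)
    (Finset.mem_Icc.2 ⟨hi, hsi⟩)).trans (hbD i)

/-- Geometric claim used in the proof of Corollary 2: every point of the cloud lies
in the Euclidean `ε`-offset of the polygonal path of an `ε`-feasible sequence. -/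
theorem feasible_path_offset {d n : ℕ} (hd : 1 ≤ d) (hn : 2 ≤ n)
    (p : Fin n → EuclideanSpace ℝ (Fin d)) (u : EuclideanSpace ℝ (Fin d))
    (hu : ‖u‖ = 1) (hmono : StrictMono (projVal p u))
    (ε : ℝ) (hε : 0 ≤ ε) {k : ℕ} (b : Fin (k + 1) → Fin n)
    (hb : IsFeasibleSeq p u ε b) (s : Fin n) :
    Metric.infDist (p s)
      (⋃ i : Fin k, segment ℝ (p (b i.castSucc)) (p (b i.succ))) ≤ ε :=
  feasible_path_offset_general hn p u hmono ε b hb s
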